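/- Let G be an (n,d,λ)-graph. Then for every nonempty subset U of the vertices of G, the induced subgraph G[U] contains a vertex whose degree in G[U] is at most d·|U|/n + λ·(1 − |U|/n) = (d − λ)·(|U|/n) + λ. -/

import Mathlib

/-- An `(n,d,λ)`-graph: a `d`-regular graph on `n` vertices all of whose adjacency-matrix
eigenvalues, except the largest one `λ₁ = d`, are at most `lam` in absolute value. -/
def IsNDL {V : Type*} [Fintype V] [DecidableEq V] (G : SimpleGraph V) [DecidableRel G.Adj]
    (n d : ℕ) (lam : ℝ) : Prop :=
  Fintype.card V = n ∧ G.IsRegularOfDegree d ∧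
    ∃ (hA : (G.adjMatrix ℝ).IsHermitian) (i₀ : V),
      hA.eigenvalues i₀ = (d : ℝ) ∧ ∀ i : V, i ≠ i₀ → |hA.eigenvalues i| ≤ lam

/-! Let `x` be the indicator vector of `U` and `A` the adjacency matrix, so that
`xᵀ A x = ∑_{v ∈ U} deg_U v`. Expand `x` in an orthonormal eigenbasis of `A`. If `λ < d`, the
eigenvalue `d` is simple and its eigenvector is the normalized all-ones vector, so the component of
`x` along it is `|U| / √n`; every other eigenvalue is at most `λ`. Hence
`xᵀ A x ≤ d |U|² / n + λ (|U| - |U|² / n)`, and some vertex of `U` has at most the average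
degree `d |U| / n + λ (1 - |U| / n)` in `G[U]`. If `d ≤ λ` this bound is at least `d`, so any
vertex of `U` will do. -/

open Matrix Finset

namespace Matrix.IsHermitian

variable {ι : Type*} [Fintype ι] [DecidableEq ι] {A : Matrix ι ι ℝ} (hA : A.IsHermitian)

theorem sum_eigenvectorBasis_dotProduct_mul (x y : ι → ℝ) :
    ∑ i, (⇑(hA.eigenvectorBasis i) ⬝ᵥ x) * (⇑(hA.eigenvectorBasis i) ⬝ᵥ y) = x ⬝ᵥ y := by
  have inner_eq (v w : EuclideanSpace ℝ ι) : inner ℝ v w = ⇑w ⬝ᵥ ⇑v := rfl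
  have h := hA.eigenvectorBasis.sum_inner_mul_inner (WithLp.toLp 2 x) (WithLp.toLp 2 y)
  simp only [inner_eq] at h
  rw [dotProduct_comm x y, ← h]
  simp_rw [dotProduct_comm y]

theorem eigenvectorBasis_dotProduct_mulVec (i : ι) (x : ι → ℝ) :
    ⇑(hA.eigenvectorBasis i) ⬝ᵥ (A *ᵥ x) = hA.eigenvalues i * (⇑(hA.eigenvectorBasis i) ⬝ᵥ x) := by
  rw [dotProduct_mulVec, ← mulVec_transpose, ← conjTranspose_eq_transpose_of_trivial, hA.eq,
    hA.mulVec_eigenvectorBasis, smul_dotProduct, smul_eq_mul]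

theorem dotProduct_mulVec_self_eq_sum (x : ι → ℝ) :
    x ⬝ᵥ (A *ᵥ x) = ∑ i, hA.eigenvalues i * (⇑(hA.eigenvectorBasis i) ⬝ᵥ x) ^ 2 := by
  rw [← hA.sum_eigenvectorBasis_dotProduct_mul]
  refine sum_congr rfl fun i _ => ?_
  rw [hA.eigenvectorBasis_dotProduct_mulVec]
  ring

theorem eigenvectorBasis_dotProduct_eq_zero {μ : ℝ} {y : ι → ℝ} (hy : A *ᵥ y = μ • y) {i : ι}
    (hi : hA.eigenvalues i ≠ μ) : ⇑(hA.eigenvectorBasis i) ⬝ᵥ y = 0 := by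
  have h := hA.eigenvectorBasis_dotProduct_mulVec i y
  rw [hy, dotProduct_smul, smul_eq_mul] at h
  exact (mul_eq_mul_right_iff.mp h.symm).resolve_left hi

theorem sq_eigenvectorBasis_dotProduct_mul_dotProduct_self {i₀ : ι} {y : ι → ℝ}
    (hy : A *ᵥ y = hA.eigenvalues i₀ • y)
    (hsimple : ∀ i ≠ i₀, hA.eigenvalues i ≠ hA.eigenvalues i₀) (x : ι → ℝ) :
    (⇑(hA.eigenvectorBasis i₀) ⬝ᵥ x) ^ 2 * (y ⬝ᵥ y) = (y ⬝ᵥ x) ^ 2 := by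
  have parseval_single (z : ι → ℝ) :
      y ⬝ᵥ z = (⇑(hA.eigenvectorBasis i₀) ⬝ᵥ y) * (⇑(hA.eigenvectorBasis i₀) ⬝ᵥ z) := by
    rw [← hA.sum_eigenvectorBasis_dotProduct_mul, sum_eq_single i₀ (fun i _ hi => ?_) (by simp)]
    rw [hA.eigenvectorBasis_dotProduct_eq_zero hy (hsimple i hi), zero_mul]
  rw [parseval_single x, parseval_single y]
  ring

theorem dotProduct_mulVec_self_le {lam : ℝ} (i₀ : ι) (hle : ∀ i ≠ i₀, hA.eigenvalues i ≤ lam)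
    (x : ι → ℝ) :
    x ⬝ᵥ (A *ᵥ x) ≤ hA.eigenvalues i₀ * (⇑(hA.eigenvectorBasis i₀) ⬝ᵥ x) ^ 2 +
      lam * (x ⬝ᵥ x - (⇑(hA.eigenvectorBasis i₀) ⬝ᵥ x) ^ 2) := by
  set c : ι → ℝ := fun i => ⇑(hA.eigenvectorBasis i) ⬝ᵥ x
  have hxx : x ⬝ᵥ x - c i₀ ^ 2 = ∑ i ∈ univ.erase i₀, c i ^ 2 := by
    rw [← hA.sum_eigenvectorBasis_dotProduct_mul, ← add_sum_erase _ _ (mem_univ i₀)]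
    simp only [c, sq, add_sub_cancel_left]
  rw [hA.dotProduct_mulVec_self_eq_sum, ← add_sum_erase _ _ (mem_univ i₀), hxx, mul_sum]
  gcongr with i hi
  exact hle i (ne_of_mem_erase hi)

theorem dotProduct_mulVec_self_mul_le {i₀ : ι} {lam : ℝ} {y : ι → ℝ}
    (hy : A *ᵥ y = hA.eigenvalues i₀ • y) (hle : ∀ i ≠ i₀, hA.eigenvalues i ≤ lam)
    (hlt : lam < hA.eigenvalues i₀) (x : ι → ℝ) :
    x ⬝ᵥ (A *ᵥ x) * (y ⬝ᵥ y) ≤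
      (hA.eigenvalues i₀ - lam) * (y ⬝ᵥ x) ^ 2 + lam * (x ⬝ᵥ x) * (y ⬝ᵥ y) := by
  have hsimple (i : ι) (hi : i ≠ i₀) : hA.eigenvalues i ≠ hA.eigenvalues i₀ :=
    ((hle i hi).trans_lt hlt).ne
  rw [← hA.sq_eigenvectorBasis_dotProduct_mul_dotProduct_self hy hsimple x]
  calc x ⬝ᵥ (A *ᵥ x) * (y ⬝ᵥ y)
      ≤ (hA.eigenvalues i₀ * (⇑(hA.eigenvectorBasis i₀) ⬝ᵥ x) ^ 2 +
          lam * (x ⬝ᵥ x - (⇑(hA.eigenvectorBasis i₀) ⬝ᵥ x) ^ 2)) * (y ⬝ᵥ y) := by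
        gcongr
        · exact dotProduct_self_star_nonneg y
        · exact hA.dotProduct_mulVec_self_le i₀ hle x
    _ = _ := by ring

end Matrix.IsHermitian

namespace SimpleGraph

variable {V : Type*} [Fintype V] (G : SimpleGraph V) [DecidableRel G.Adj]

theorem card_filter_adj_le_degree (U : Finset V) (v : V) : #{u ∈ U | G.Adj v u} ≤ G.degree v := by
  rw [← card_neighborFinset_eq_degree]
  exact card_le_card fun u hu => (G.mem_neighborFinset v u).2 (mem_filter.1 hu).2

theorem adjMatrix_mulVec_ite_mem [DecidableEq V] {α : Type*} [NonAssocSemiring α] (U : Finset V)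
    (v : V) :
    (G.adjMatrix α *ᵥ fun u => if u ∈ U then 1 else 0) v = #{u ∈ U | G.Adj v u} := by
  rw [adjMatrix_mulVec_apply, sum_boole, filter_mem_eq_inter, inter_comm]
  congr 2
  ext u
  simp

theorem dotProduct_adjMatrix_mulVec_ite_mem [DecidableEq V] {α : Type*} [NonAssocSemiring α]
    (U : Finset V) :
    (fun u => if u ∈ U then 1 else 0) ⬝ᵥ (G.adjMatrix α *ᵥ fun u => if u ∈ U then 1 else 0) =
      ∑ v ∈ U, (#{u ∈ U | G.Adj v u} : α) := by
  simp only [dotProduct, adjMatrix_mulVec_ite_mem, ite_mul, one_mul, zero_mul, sum_ite_mem,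
    univ_inter]

variable {G} in
theorem IsRegularOfDegree.sum_card_filter_adj_mul_card_le [DecidableEq V] {d : ℕ}
    (hreg : G.IsRegularOfDegree d) (hA : (G.adjMatrix ℝ).IsHermitian) {i₀ : V} {lam : ℝ}
    (hi₀ : hA.eigenvalues i₀ = d) (hle : ∀ i ≠ i₀, hA.eigenvalues i ≤ lam) (hlt : lam < d)
    (U : Finset V) :
    (∑ v ∈ U, (#{u ∈ U | G.Adj v u} : ℝ)) * Fintype.card V ≤
      (d - lam) * #U ^ 2 + lam * #U * Fintype.card V := by
  have hones : G.adjMatrix ℝ *ᵥ Function.const V 1 = hA.eigenvalues i₀ • Function.const V 1 := by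
    ext v
    simp [hreg v, hi₀]
  have key := hA.dotProduct_mulVec_self_mul_le hones hle (hi₀ ▸ hlt)
    (fun u => if u ∈ U then 1 else 0)
  have hyy : Function.const V (1 : ℝ) ⬝ᵥ Function.const V 1 = Fintype.card V := by
    simp [dotProduct]
  have hyx : Function.const V (1 : ℝ) ⬝ᵥ (fun u => if u ∈ U then 1 else 0) = #U := by
    simp [dotProduct]
  have hxx :
      (fun u => if u ∈ U then (1 : ℝ) else 0) ⬝ᵥ (fun u => if u ∈ U then 1 else 0) = #U := by
    simp [dotProduct]
  rwa [dotProduct_adjMatrix_mulVec_ite_mem, hyy, hyx, hxx, hi₀] at key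

end SimpleGraph

/-- Let `G` be an `(n,d,λ)`-graph. Then for every nonempty vertex subset `U`, the induced
subgraph `G[U]` contains a vertex whose degree inside `U` is at most
`d·|U|/n + λ·(1 − |U|/n)`. -/
theorem stmt_10 {V : Type*} [Fintype V] [DecidableEq V] (G : SimpleGraph V)
    [DecidableRel G.Adj] (n d : ℕ) (lam : ℝ)
    (h : IsNDL G n d lam) :
    ∀ U : Finset V, U.Nonempty →
      ∃ v ∈ U, ((U.filter fun u => G.Adj v u).card : ℝ) ≤
        (d : ℝ) * U.card / n + lam * (1 - (U.card : ℝ) / n) := by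
  obtain ⟨rfl, hreg, hA, i₀, hi₀, hbound⟩ := h
  intro U hU
  have hn : (0 : ℝ) < Fintype.card V := by exact_mod_cast Fintype.card_pos_iff.2 ⟨hU.choose⟩
  have hUn : (#U : ℝ) ≤ Fintype.card V := by exact_mod_cast card_le_univ U
  rcases le_or_gt (d : ℝ) lam with hdl | hdl
  · obtain ⟨v, hv⟩ := hU
    refine ⟨v, hv, ?_⟩
    have hdeg : (#{u ∈ U | G.Adj v u} : ℝ) ≤ d := by
      exact_mod_cast hreg v ▸ G.card_filter_adj_le_degree U v
    have hfrac : (#U : ℝ) / Fintype.card V ≤ 1 := div_le_one_of_le₀ hUn hn.le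
    rw [mul_div_assoc]
    nlinarith [mul_nonneg (sub_nonneg.2 hdl) (sub_nonneg.2 hfrac)]
  · have hsum := hreg.sum_card_filter_adj_mul_card_le hA hi₀
      (fun i hi => le_of_abs_le (hbound i hi)) hdl U
    refine exists_le_of_sum_le hU ?_
    rw [sum_const, nsmul_eq_mul]
    calc ∑ v ∈ U, (#{u ∈ U | G.Adj v u} : ℝ)
        ≤ ((d - lam) * #U ^ 2 + lam * #U * Fintype.card V) / Fintype.card V :=
          (le_div_iff₀ hn).2 hsum
      _ = _ := by field_simp; ring
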